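/- arXiv:1708.08847 — 2 statements merged into one kernel-verified Lean document; each statement's English description precedes it below -/
import Mathlib

section
/- Let μ be a probability measure on ℝ with compact support, let f : ℝ → ℝ be continuous with g(λ) = ∫₀^λ (f'(s))² ds for f ∈ C¹, and let u = ∫ λ dμ(λ) (assume u lies in the support interval). If ∫ (λ g(λ) - f(λ)²) dμ(λ) = u·∫ g dμ - (∫ f dμ)², then (∫ f dμ - f(u))² ≤ 0, hence ∫ f dμ = f(u). -/
/-!
Cauchy–Schwarz on the segment between `u` and `λ` gives the pointwise bound
`(f λ - f u)² ≤ (λ - u) (g λ - g u)`, since `f λ - f u = ∫ f'` and `g λ - g u = ∫ f'²` over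
that segment. Integrating it against `μ` and expanding both sides using `∫ λ dμ = u`, the
commutation relation turns the integrated bound into `(∫ f dμ - f u)² ≤ 0`.
-/

open MeasureTheory Set

theorem ContinuousOn.integrable_of_measure_compl_eq_zero {X E : Type*} [TopologicalSpace X]
    [T2Space X] [MeasurableSpace X] [OpensMeasurableSpace X] [NormedAddCommGroup E]
    {μ : Measure X} [IsFiniteMeasureOnCompacts μ] {K : Set X} {h : X → E}
    (hh : ContinuousOn h K) (hK : IsCompact K) (hμK : μ Kᶜ = 0) : Integrable h μ := by
  have hint : IntegrableOn h K μ := hh.integrableOn_compact hK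
  rwa [IntegrableOn, Measure.restrict_eq_self_of_ae_mem (mem_ae_iff.2 hμK)] at hint

theorem integral_sub_mul_sub {α : Type*} [MeasurableSpace α] {μ : Measure α}
    [IsFiniteMeasure μ] {a b : α → ℝ} (ha : Integrable a μ) (hb : Integrable b μ)
    (hab : Integrable (fun x ↦ a x * b x) μ) (s t : ℝ) :
    ∫ x, (a x - s) * (b x - t) ∂μ
      = ∫ x, a x * b x ∂μ - s * ∫ x, b x ∂μ - t * ∫ x, a x ∂μ + s * t * μ.real univ := by
  have hexp : ∀ x, (a x - s) * (b x - t) = a x * b x - s * b x - t * a x + s * t := fun x ↦ by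
    ring
  have hab_s : Integrable (fun x ↦ a x * b x - s * b x) μ := hab.sub (hb.const_mul s)
  have hab_st : Integrable (fun x ↦ a x * b x - s * b x - t * a x) μ := hab_s.sub (ha.const_mul t)
  simp_rw [hexp]
  rw [integral_add hab_st (integrable_const _), integral_sub hab_s (ha.const_mul t),
    integral_sub hab (hb.const_mul s),
    integral_const_mul, integral_const_mul, integral_const, smul_eq_mul]
  ring

theorem sq_integral_le_measureReal_univ_mul_integral_sq {α : Type*} [MeasurableSpace α]
    {μ : Measure α} [IsFiniteMeasure μ] {h : α → ℝ} (hh : Integrable h μ)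
    (hh2 : Integrable (fun x ↦ h x * h x) μ) :
    (∫ x, h x ∂μ) ^ 2 ≤ μ.real univ * ∫ x, h x * h x ∂μ := by
  have hquad : ∀ s : ℝ, 0 ≤ μ.real univ * (s * s) + (-2 * ∫ x, h x ∂μ) * s
      + ∫ x, h x * h x ∂μ := fun s ↦ by
    have hsq := integral_nonneg (μ := μ) (f := fun x ↦ (h x - s) * (h x - s))
      fun x ↦ mul_self_nonneg (h x - s)
    rw [integral_sub_mul_sub hh hh hh2] at hsq
    linarith
  have hdiscrim := discrim_le_zero hquad
  rw [discrim] at hdiscrim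
  linarith

theorem intervalIntegral.sq_integral_le_mul_integral_sq {h : ℝ → ℝ} {c d : ℝ}
    (hh : IntervalIntegrable h volume c d)
    (hh2 : IntervalIntegrable (fun x ↦ h x * h x) volume c d) :
    (∫ x in c..d, h x) ^ 2 ≤ (d - c) * ∫ x in c..d, h x * h x := by
  wlog hcd : c ≤ d generalizing c d
  · have := this hh.symm hh2.symm (le_of_not_ge hcd)
    rw [integral_symm c d, integral_symm c d] at this
    linarith
  rw [integral_of_le hcd, integral_of_le hcd, ← Real.volume_real_Ioc_of_le hcd,
    ← measureReal_restrict_apply_univ]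
  exact sq_integral_le_measureReal_univ_mul_integral_sq
    ((intervalIntegrable_iff_integrableOn_Ioc_of_le hcd).1 hh)
    ((intervalIntegrable_iff_integrableOn_Ioc_of_le hcd).1 hh2)

theorem ContDiff.sq_sub_le_mul_integral_deriv_sq {f : ℝ → ℝ} (hf : ContDiff ℝ 1 f) (a b : ℝ) :
    (f b - f a) ^ 2 ≤ (b - a) * ∫ s in a..b, deriv f s * deriv f s := by
  have hf' : Continuous (deriv f) := hf.continuous_deriv le_rfl
  rw [← intervalIntegral.integral_deriv_eq_sub
    (fun x _ ↦ (hf.differentiable one_ne_zero).differentiableAt) (hf'.intervalIntegrable a b)]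
  exact intervalIntegral.sq_integral_le_mul_integral_sq (hf'.intervalIntegrable a b)
    ((hf'.mul hf').intervalIntegrable a b)

theorem young_measure_flux_identity_general (μ : Measure ℝ) [IsProbabilityMeasure μ]
    (K : Set ℝ) (hK : IsCompact K) (hμK : μ Kᶜ = 0)
    (f g : ℝ → ℝ) (hf : ContDiff ℝ 1 f)
    (hg : ∀ l : ℝ, g l = ∫ s in (0:ℝ)..l, (deriv f s) ^ 2)
    (u : ℝ) (hu : u = ∫ l, l ∂μ)
    (hcomm : ∫ l, (l * g l - (f l) ^ 2) ∂μ =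
      u * (∫ l, g l ∂μ) - (∫ l, f l ∂μ) ^ 2) :
    ((∫ l, f l ∂μ) - f u) ^ 2 ≤ 0 ∧ (∫ l, f l ∂μ) = f u := by
  have hf'2 : ∀ a b, IntervalIntegrable (fun s ↦ deriv f s ^ 2) volume a b := fun a b ↦
    ((hf.continuous_deriv le_rfl).pow 2).intervalIntegrable a b
  have hgc : Continuous g := funext hg ▸ intervalIntegral.continuous_primitive hf'2 0
  have hfc : Continuous f := hf.continuous
  have integrable {h : ℝ → ℝ} (hh : Continuous h) : Integrable h μ :=
    hh.continuousOn.integrable_of_measure_compl_eq_zero hK hμK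
  have hpointwise : ∀ l, (f l - f u) * (f l - f u) ≤ (l - u) * (g l - g u) := fun l ↦ by
    rw [hg, hg, intervalIntegral.integral_interval_sub_left (hf'2 0 l) (hf'2 0 u)]
    simpa only [sq] using hf.sq_sub_le_mul_integral_deriv_sq u l
  have hmono := integral_mono (integrable (by fun_prop)) (integrable (by fun_prop)) hpointwise
  rw [integral_sub_mul_sub (integrable hfc) (integrable hfc) (integrable (by fun_prop)),
    integral_sub_mul_sub (a := fun l ↦ l) (integrable continuous_id) (integrable hgc)
      (integrable (by fun_prop)),
    ← hu, probReal_univ] at hmono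
  rw [integral_sub (integrable (by fun_prop)) (integrable (by fun_prop))] at hcomm
  simp only [sq] at hcomm ⊢
  have hsq : ((∫ l, f l ∂μ) - f u) * ((∫ l, f l ∂μ) - f u) ≤ 0 := by linarith
  exact ⟨hsq, sub_eq_zero.1 (mul_self_eq_zero.1 (le_antisymm hsq (mul_self_nonneg _)))⟩

theorem young_measure_flux_identity (μ : Measure ℝ) [IsProbabilityMeasure μ]
    (K : Set ℝ) (hK : IsCompact K) (hμK : μ Kᶜ = 0)
    (f g : ℝ → ℝ) (hf : ContDiff ℝ 1 f)
    (hg : ∀ l : ℝ, g l = ∫ s in (0:ℝ)..l, (deriv f s) ^ 2)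
    (u : ℝ) (hu : u = ∫ l, l ∂μ) (huK : u ∈ K)
    (hcomm : ∫ l, (l * g l - (f l) ^ 2) ∂μ =
      u * (∫ l, g l ∂μ) - (∫ l, f l ∂μ) ^ 2) :
    ((∫ l, f l ∂μ) - f u) ^ 2 ≤ 0 ∧ (∫ l, f l ∂μ) = f u :=
  young_measure_flux_identity_general μ K hK hμK f g hf hg u hu hcomm
end

section
/- Let ν be a compactly supported probability measure on ℝ, and let F₁₁, F₁₂, F₂₂, and real numbers a₁₁ = ∫F₁₁dν, a₁₂ = ∫F₁₂dν, a₂₂ = ∫F₂₂dν satisfy ∫ (F₁₁(λ) - a₁₁)(F₂₂(λ) - a₂₂) - (F₁₂(λ) - a₁₂)² dν(λ) = 0, where F₁₂(w) - F₁₂(c))² ≤ (F₁₁(w)-F₁₁(c))(F₂₂(w)-F₂₂(c)) holds for all w, c (Cauchy–Schwarz structure), with F₁₁ continuous and strictly increasing. Then there exists c ∈ ℝ with F₁₁(c) = a₁₁, and the function D(w) = (F₁₁(w)-F₁₁(c))(F₂₂(w)-F₂₂(c)) - (F₁₂(w)-F₁₂(c))² satisfies ∫ D dν = (a₁₁ -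 F₁₁(c))(a₂₂ - F₂₂(c)) - (a₁₂ - F₁₂(c))² ≤ 0; combined with D ≥ 0, D = 0 ν-a.e. -/
open MeasureTheory

lemma my_integrable_of_continuous (ν : Measure ℝ) [IsProbabilityMeasure ν]
    (K : Set ℝ) (hK : IsCompact K) (hνK : ν Kᶜ = 0) (f : ℝ → ℝ) (hf : Continuous f) :
    Integrable f ν := by
  obtain ⟨C, hC⟩ := hK.exists_bound_of_continuousOn hf.continuousOn
  refine (integrable_const C).mono' hf.aestronglyMeasurable ?_
  rw [ae_iff]
  exact measure_mono_null (fun x hx hxK => hx (hC x hxK)) hνK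

theorem compensated_compactness_defect_vanishes (ν : Measure ℝ) [IsProbabilityMeasure ν]
    (K : Set ℝ) (hK : IsCompact K) (hνK : ν Kᶜ = 0)
    (F₁₁ F₁₂ F₂₂ : ℝ → ℝ)
    (h11c : Continuous F₁₁) (h12c : Continuous F₁₂) (h22c : Continuous F₂₂)
    (h11m : StrictMono F₁₁)
    (hCS : ∀ w c : ℝ, (F₁₂ w - F₁₂ c) ^ 2 ≤ (F₁₁ w - F₁₁ c) * (F₂₂ w - F₂₂ c))
    (a₁₁ a₁₂ a₂₂ : ℝ)
    (ha11 : a₁₁ = ∫ l, F₁₁ l ∂ν) (ha12 : a₁₂ = ∫ l, F₁₂ l ∂ν)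
    (ha22 : a₂₂ = ∫ l, F₂₂ l ∂ν)
    (hcomm : ∫ l, ((F₁₁ l - a₁₁) * (F₂₂ l - a₂₂) - (F₁₂ l - a₁₂) ^ 2) ∂ν = 0) :
    ∃ c : ℝ, F₁₁ c = a₁₁ ∧
      (∫ l, ((F₁₁ l - F₁₁ c) * (F₂₂ l - F₂₂ c) - (F₁₂ l - F₁₂ c) ^ 2) ∂ν =
        (a₁₁ - F₁₁ c) * (a₂₂ - F₂₂ c) - (a₁₂ - F₁₂ c) ^ 2) ∧
      (∫ l, ((F₁₁ l - F₁₁ c) * (F₂₂ l - F₂₂ c) - (F₁₂ l - F₁₂ c) ^ 2) ∂ν ≤ 0) ∧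
      (∀ᵐ l ∂ν, (F₁₁ l - F₁₁ c) * (F₂₂ l - F₂₂ c) - (F₁₂ l - F₁₂ c) ^ 2 = 0) := by
  -- K is nonempty
  have hKne : K.Nonempty := by
    rcases K.eq_empty_or_nonempty with h | h
    · exfalso
      rw [h, Set.compl_empty] at hνK
      simp [measure_univ] at hνK
    · exact h
  -- extreme values of F₁₁ on K
  obtain ⟨u, huK, hu⟩ := hK.exists_isMinOn hKne h11c.continuousOn
  obtain ⟨v, hvK, hv⟩ := hK.exists_isMaxOn hKne h11c.continuousOn
  have hKae : ∀ᵐ l ∂ν, l ∈ K := by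
    rw [ae_iff]; exact measure_mono_null (fun x hx => hx) hνK
  have hint11 := my_integrable_of_continuous ν K hK hνK _ h11c
  have hint12 := my_integrable_of_continuous ν K hK hνK _ h12c
  have hint22 := my_integrable_of_continuous ν K hK hνK _ h22c
  have hlow : F₁₁ u ≤ a₁₁ := by
    rw [ha11]
    have h1 : (∫ _, F₁₁ u ∂ν) ≤ ∫ l, F₁₁ l ∂ν := by
      refine integral_mono_ae (integrable_const _) hint11 ?_
      filter_upwards [hKae] with l hl
      exact hu hl
    simpa [measure_univ] using h1
  have hhigh : a₁₁ ≤ F₁₁ v := by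
    rw [ha11]
    have h1 : ∫ l, F₁₁ l ∂ν ≤ ∫ _, F₁₁ v ∂ν := by
      refine integral_mono_ae hint11 (integrable_const _) ?_
      filter_upwards [hKae] with l hl
      exact hv hl
    simpa [measure_univ] using h1
  -- IVT
  have hmem : a₁₁ ∈ Set.uIcc (F₁₁ u) (F₁₁ v) := Set.mem_uIcc.2 (Or.inl ⟨hlow, hhigh⟩)
  obtain ⟨c, _, hc⟩ := intermediate_value_uIcc (h11c.continuousOn (s := Set.uIcc u v)) hmem
  refine ⟨c, hc, ?_⟩
  set b₂ := F₂₂ c with hb₂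
  set b₁ := F₁₂ c with hb₁
  -- integral expansion
  have hintH : Integrable (fun l => (F₁₁ l - a₁₁) * (F₂₂ l - a₂₂) - (F₁₂ l - a₁₂) ^ 2) ν :=
    my_integrable_of_continuous ν K hK hνK _
      (((h11c.sub continuous_const).mul (h22c.sub continuous_const)).sub
        ((h12c.sub continuous_const).pow 2))
  have hkey : ∀ l, (F₁₁ l - F₁₁ c) * (F₂₂ l - b₂) - (F₁₂ l - b₁) ^ 2 =
      ((F₁₁ l - a₁₁) * (F₂₂ l - a₂₂) - (F₁₂ l - a₁₂) ^ 2) +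
      (((a₂₂ - b₂) * F₁₁ l + (2 * (b₁ - a₁₂)) * F₁₂ l +
        (-(a₂₂ - b₂) * a₁₁ + (b₁ - a₁₂) * (-a₁₂ - b₁)))) := by
    intro l; rw [hc]; ring
  have hEq : ∫ l, ((F₁₁ l - F₁₁ c) * (F₂₂ l - b₂) - (F₁₂ l - b₁) ^ 2) ∂ν =
      (a₁₁ - F₁₁ c) * (a₂₂ - b₂) - (a₁₂ - b₁) ^ 2 := by
    have h1 : Integrable (fun l => (a₂₂ - b₂) * F₁₁ l) ν := hint11.const_mul _
    have h2 : Integrable (fun l => (2 * (b₁ - a₁₂)) * F₁₂ l) ν := hint12.const_mul _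
    calc ∫ l, ((F₁₁ l - F₁₁ c) * (F₂₂ l - b₂) - (F₁₂ l - b₁) ^ 2) ∂ν
        = ∫ l, (((F₁₁ l - a₁₁) * (F₂₂ l - a₂₂) - (F₁₂ l - a₁₂) ^ 2) +
            (((a₂₂ - b₂) * F₁₁ l + (2 * (b₁ - a₁₂)) * F₁₂ l +
              (-(a₂₂ - b₂) * a₁₁ + (b₁ - a₁₂) * (-a₁₂ - b₁))))) ∂ν := by
          exact integral_congr_ae (Filter.Eventually.of_forall hkey)
      _ = (∫ l, ((F₁₁ l - a₁₁) * (F₂₂ l - a₂₂) - (F₁₂ l - a₁₂) ^ 2) ∂ν) +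
          (∫ l, ((a₂₂ - b₂) * F₁₁ l + (2 * (b₁ - a₁₂)) * F₁₂ l +
            (-(a₂₂ - b₂) * a₁₁ + (b₁ - a₁₂) * (-a₁₂ - b₁))) ∂ν) :=
          integral_add hintH ((h1.add h2).add (integrable_const _))
      _ = (a₁₁ - F₁₁ c) * (a₂₂ - b₂) - (a₁₂ - b₁) ^ 2 := by
          have hmid : (∫ l, ((a₂₂ - b₂) * F₁₁ l + (2 * (b₁ - a₁₂)) * F₁₂ l +
              (-(a₂₂ - b₂) * a₁₁ + (b₁ - a₁₂) * (-a₁₂ - b₁))) ∂ν) =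
              (a₂₂ - b₂) * (∫ l, F₁₁ l ∂ν) + (2 * (b₁ - a₁₂)) * (∫ l, F₁₂ l ∂ν) +
                (-(a₂₂ - b₂) * a₁₁ + (b₁ - a₁₂) * (-a₁₂ - b₁)) := by
            have e1 : ∫ l, (((a₂₂ - b₂) * F₁₁ l + (2 * (b₁ - a₁₂)) * F₁₂ l) +
                (-(a₂₂ - b₂) * a₁₁ + (b₁ - a₁₂) * (-a₁₂ - b₁))) ∂ν =
                (∫ l, ((a₂₂ - b₂) * F₁₁ l + (2 * (b₁ - a₁₂)) * F₁₂ l) ∂ν) +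
                  ∫ _, (-(a₂₂ - b₂) * a₁₁ + (b₁ - a₁₂) * (-a₁₂ - b₁)) ∂ν :=
              integral_add (h1.add h2) (integrable_const _)
            have e2 : ∫ l, ((a₂₂ - b₂) * F₁₁ l + (2 * (b₁ - a₁₂)) * F₁₂ l) ∂ν =
                (∫ l, (a₂₂ - b₂) * F₁₁ l ∂ν) + ∫ l, (2 * (b₁ - a₁₂)) * F₁₂ l ∂ν :=
              integral_add h1 h2
            rw [e1, e2, integral_const_mul, integral_const_mul, integral_const]
            simp [measure_univ]
          rw [hcomm, hmid, ← ha11, ← ha12, hc]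
          ring
  refine ⟨hEq, ?_, ?_⟩
  · rw [hEq, hc]
    nlinarith [sq_nonneg (a₁₂ - b₁)]
  · have hnonneg : ∀ l, 0 ≤ (F₁₁ l - F₁₁ c) * (F₂₂ l - b₂) - (F₁₂ l - b₁) ^ 2 := by
      intro l; have := hCS l c; linarith
    have hintD : Integrable (fun l => (F₁₁ l - F₁₁ c) * (F₂₂ l - b₂) - (F₁₂ l - b₁) ^ 2) ν :=
      my_integrable_of_continuous ν K hK hνK _
        (((h11c.sub continuous_const).mul (h22c.sub continuous_const)).sub
          ((h12c.sub continuous_const).pow 2))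
    have hzero : ∫ l, ((F₁₁ l - F₁₁ c) * (F₂₂ l - b₂) - (F₁₂ l - b₁) ^ 2) ∂ν = 0 := by
      refine le_antisymm ?_ (integral_nonneg hnonneg)
      rw [hEq, hc]; nlinarith [sq_nonneg (a₁₂ - b₁)]
    have := (integral_eq_zero_iff_of_nonneg hnonneg hintD).1 hzero
    filter_upwards [this] with l hl
    simpa using hl
end
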